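/- Let T be a Lions forest with dual Lions forest T* = (H', D), and let d1, …, dn ∈ D be distinct edges such that the graph (H', {d1, …, dn}) contains no cycle. Then there exist Lions forests T^{(0)} = T, T^{(1)}, …, T^{(n)} such that for every j ∈ {1, …, n}: writing d_j = {h_{j,1}, h_{j,2}} (hyperedges of T), the hyperedges ĥ1 and ĥ2 of T^{(j−1)} containing h_{j,1} and h_{j,2} respectively are distinct, {ĥ1, ĥ2} is an edge of the dual Lions forest of T^{(j−1)}, and T^{(j)} is the merged Lions forest (T^{(j−1)})^{{ĥ1, ĥ2}}. -/

import Mathlib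

/-- A partition of a set `S`: a family of pairwise disjoint nonempty subsets of `S`
whose union is `S`. -/
def IsPartitionOf {α : Type*} (S : Set α) (P : Set (Set α)) : Prop :=
  (∀ p ∈ P, p.Nonempty) ∧ (∀ p ∈ P, p ⊆ S) ∧ P.Pairwise Disjoint ∧ ⋃₀ P = S

/-- A Lions forest over node type `V` with labels in `{1, …, d}` (encoded as `Fin d`).
The data consists of a finite nonempty node set `N`, a set of directed edges `E` pointing
towards the roots, a distinguished hyperedge `h0 ⊆ N`, a partition `H` of `N \ h0`,
a labelling `L`, together with the depth function (number of edges on the path to the root),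
subject to the structural conditions (i), (ii), (iii) of a Lions forest. -/
structure LionsForest (V : Type*) (d : ℕ) where
  N : Set V
  E : Set (V × V)
  h0 : Set V
  H : Set (Set V)
  L : V → Fin d
  depth : V → ℕ
  finite_N : N.Finite
  nonempty_N : N.Nonempty
  mem_of_edge : ∀ x y : V, (x, y) ∈ E → x ∈ N ∧ y ∈ N
  edge_unique : ∀ x y z : V, (x, y) ∈ E → (x, z) ∈ E → y = z
  h0_subset : h0 ⊆ N
  H_partition : IsPartitionOf (N \ h0) H
  depth_root : ∀ x ∈ N, (∀ y, (x, y) ∉ E) → depth x = 0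
  depth_edge : ∀ x y : V, (x, y) ∈ E → depth x = depth y + 1
  h0_root : h0.Nonempty → ∃ x ∈ h0, ∀ y, (x, y) ∉ E
  hyper_parent : ∀ h ∈ insert h0 H \ {(∅ : Set V)}, ∀ x ∈ h, ∀ y ∈ h,
    depth x < depth y → ∀ z, (y, z) ∈ E → z ∈ h
  hyper_sibling : ∀ h ∈ insert h0 H \ {(∅ : Set V)}, ∀ x₁ ∈ h, ∀ y₁ ∈ h,
    depth x₁ = depth y₁ → ∀ x₂ y₂, (x₁, x₂) ∈ E → (y₁, y₂) ∈ E → x₂ ≠ y₂ →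
      x₂ ∈ h ∧ y₂ ∈ h

/-- A root of the forest: a node with no outgoing edge. -/
def LionsForest.IsRoot {V : Type*} {d : ℕ} (T : LionsForest V d) (x : V) : Prop :=
  x ∈ T.N ∧ ∀ y, (x, y) ∉ T.E

/-- The set of hyperedges `H' = (H ∪ {h0}) \ {∅}` of a Lions forest. -/
def LionsForest.hyperedges {V : Type*} {d : ℕ} (T : LionsForest V d) : Set (Set V) :=
  insert T.h0 T.H \ {∅}

/-- The adjacency relation of the dual Lions forest `T* = (H', D)`: two distinct hyperedges
`h1, h2 ∈ H'` are adjacent iff `h1 ∪ h2` satisfies the structural conditions (ii), (iii) of a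
hyperedge. -/
def dualAdj {V : Type*} {d : ℕ} (T : LionsForest V d) (h1 h2 : Set V) : Prop :=
  h1 ∈ T.hyperedges ∧ h2 ∈ T.hyperedges ∧ h1 ≠ h2 ∧
  (∀ x ∈ h1 ∪ h2, ∀ y ∈ h1 ∪ h2, T.depth x < T.depth y →
    ∀ z, (y, z) ∈ T.E → z ∈ h1 ∪ h2) ∧
  (∀ x₁ ∈ h1 ∪ h2, ∀ y₁ ∈ h1 ∪ h2, T.depth x₁ = T.depth y₁ →
    ∀ x₂ y₂, (x₁, x₂) ∈ T.E → (y₁, y₂) ∈ T.E → x₂ ≠ y₂ →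
      x₂ ∈ h1 ∪ h2 ∧ y₂ ∈ h1 ∪ h2)

/-- `T'` is the Lions forest obtained from `T` by merging the two dual-adjacent hyperedges
`h1` and `h2` into `h1 ∪ h2`. -/
def IsMerge {V : Type*} {d : ℕ} (T : LionsForest V d) (h1 h2 : Set V)
    (T' : LionsForest V d) : Prop :=
  T'.N = T.N ∧ T'.E = T.E ∧ T'.L = T.L ∧
  ((T.h0 = h1 ∨ T.h0 = h2) →
    T'.h0 = h1 ∪ h2 ∧ T'.H = T.H \ {h1, h2}) ∧
  (¬(T.h0 = h1 ∨ T.h0 = h2) →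
    T'.h0 = T.h0 ∧ T'.H = T.H \ {h1, h2} ∪ {h1 ∪ h2})

/-!
The merges are performed in the order `d₁, …, dₙ`, and the hyperedges of `T⁽ʲ⁾` are unions of
hyperedges of `T` connected by `d₁, …, dⱼ`. Since the `dⱼ` span no cycle, the two ends of `dⱼ` are
not yet connected, so they lie in distinct hyperedges `ĥ₁ ≠ ĥ₂` of `T⁽ʲ⁻¹⁾`.

The point is that `ĥ₁ ∪ ĥ₂` again satisfies conditions (ii) and (iii). In general, two disjoint
sets `A`, `B` satisfying (ii) and (iii) have a union satisfying them as soon as some `C ⊆ A ∪ B`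
satisfying them meets both. Comparing the lowest levels of `A`, `B`, `C ∩ A` and `C ∩ B` shows
that either the lowest nodes of `A` hang from a node of `B` (or vice versa), or the lowest nodes
of `A` and of `B` sit at the same depth and share their parent.
-/

namespace IsPartitionOf

variable {α : Type*} {S a b : Set α} {P : Set (Set α)}

theorem eq_of_mem_of_mem (hP : IsPartitionOf S P) (ha : a ∈ P) (hb : b ∈ P) {x : α}
    (hxa : x ∈ a) (hxb : x ∈ b) : a = b := by
  by_contra hab
  exact Set.disjoint_left.mp (hP.2.2.1 ha hb hab) hxa hxb

theorem insert_diff_empty (haS : a ⊆ S) (hP : IsPartitionOf (S \ a) P) :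
    IsPartitionOf S (insert a P \ {∅}) := by
  obtain ⟨hne, hsub, hdisj, hunion⟩ := hP
  refine ⟨fun p hp => Set.nonempty_iff_ne_empty.2 hp.2, ?_, ?_, ?_⟩
  · rintro p ⟨rfl | hp, -⟩
    · exact haS
    · exact (hsub p hp).trans Set.sdiff_subset
  · have hdisj_a : ∀ p ∈ P, Disjoint a p := fun p hp =>
      Set.disjoint_sdiff_right.mono_right (hsub p hp)
    rintro p ⟨rfl | hp, -⟩ q ⟨rfl | hq, -⟩ hpq
    · exact absurd rfl hpq
    · exact hdisj_a q hq
    · exact (hdisj_a p hp).symm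
    · exact hdisj hp hq hpq
  · rw [Set.sUnion_sdiff_singleton_empty, Set.sUnion_insert, hunion, Set.union_sdiff_cancel haS]

theorem of_insert_diff_empty (hP : IsPartitionOf S (insert a P \ {∅})) (haP : a ∉ P)
    (hP0 : ∅ ∉ P) : IsPartitionOf (S \ a) P := by
  obtain ⟨hne, hsub, hdisj, hunion⟩ := hP
  have hmem : ∀ p ∈ P, p ∈ insert a P \ {∅} := fun p hp =>
    ⟨Or.inr hp, fun h => hP0 (Set.mem_singleton_iff.1 h ▸ hp)⟩
  have hdisj_a : ∀ p ∈ P, Disjoint a p := by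
    intro p hp
    rcases Set.eq_empty_or_nonempty a with rfl | ha
    · exact Set.empty_disjoint p
    · exact hdisj ⟨Or.inl rfl, ha.ne_empty⟩ (hmem p hp) fun h => haP (h ▸ hp)
  refine ⟨fun p hp => hne p (hmem p hp), fun p hp => Set.subset_sdiff.2
    ⟨hsub p (hmem p hp), (hdisj_a p hp).symm⟩, hdisj.mono hmem, ?_⟩
  rw [Set.sUnion_sdiff_singleton_empty, Set.sUnion_insert] at hunion
  rw [← hunion, Set.union_sdiff_left, eq_comm, sdiff_eq_left]
  exact Set.disjoint_sUnion_left.2 fun p hp => (hdisj_a p hp).symm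

theorem merge (hP : IsPartitionOf S P) (ha : a ∈ P) (hb : b ∈ P) :
    IsPartitionOf S (insert (a ∪ b) (P \ {a, b})) := by
  obtain ⟨hne, hsub, hdisj, hunion⟩ := hP
  refine ⟨?_, ?_, ?_, ?_⟩
  · rintro p (rfl | ⟨hp, -⟩)
    · exact (hne a ha).mono Set.subset_union_left
    · exact hne p hp
  · rintro p (rfl | ⟨hp, -⟩)
    · exact Set.union_subset (hsub a ha) (hsub b hb)
    · exact hsub p hp
  · refine (Set.pairwise_insert_of_symm).2
      ⟨hdisj.mono Set.sdiff_subset, fun p ⟨hp, hpab⟩ _ => Set.disjoint_union_left.2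
        ⟨hdisj ha hp fun h => hpab (Or.inl h.symm), hdisj hb hp fun h => hpab (Or.inr h.symm)⟩⟩
  · rw [← hunion]
    ext x
    simp only [Set.mem_sUnion, Set.mem_insert_iff, Set.mem_sdiff]
    constructor
    · rintro ⟨p, rfl | ⟨hp, -⟩, hx⟩
      · exact hx.elim (fun hx => ⟨a, ha, hx⟩) fun hx => ⟨b, hb, hx⟩
      · exact ⟨p, hp, hx⟩
    · rintro ⟨p, hp, hx⟩
      by_cases hpab : p = a ∨ p = b
      · exact ⟨a ∪ b, Or.inl rfl, hpab.elim (fun h => Or.inl (h ▸ hx)) fun h => Or.inr (h ▸ hx)⟩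
      · exact ⟨p, Or.inr ⟨hp, hpab⟩, hx⟩

end IsPartitionOf

namespace LionsForest

variable {V : Type*} {d : ℕ} {T : LionsForest V d}

/-- Conditions (ii) and (iii) of a hyperedge, imposed on an arbitrary set of nodes. -/
def Admissible (T : LionsForest V d) (S : Set V) : Prop :=
  (∀ x ∈ S, ∀ y ∈ S, T.depth x < T.depth y → ∀ z, (y, z) ∈ T.E → z ∈ S) ∧
  (∀ x₁ ∈ S, ∀ y₁ ∈ S, T.depth x₁ = T.depth y₁ → ∀ x₂ y₂, (x₁, x₂) ∈ T.E →
    (y₁, y₂) ∈ T.E → x₂ ≠ y₂ → x₂ ∈ S ∧ y₂ ∈ S)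

theorem dualAdj_iff {h₁ h₂ : Set V} : dualAdj T h₁ h₂ ↔
    h₁ ∈ T.hyperedges ∧ h₂ ∈ T.hyperedges ∧ h₁ ≠ h₂ ∧ T.Admissible (h₁ ∪ h₂) :=
  Iff.rfl

theorem admissible_of_mem_hyperedges {h : Set V} (hh : h ∈ T.hyperedges) : T.Admissible h :=
  ⟨T.hyper_parent h hh, T.hyper_sibling h hh⟩

theorem Admissible.of_E_depth_eq {T' : LionsForest V d} (hE : T'.E = T.E)
    (hdepth : T'.depth = T.depth) {S : Set V} (hS : T.Admissible S) : T'.Admissible S := by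
  rwa [Admissible, hE, hdepth]

theorem exists_edge_of_depth_ne_zero {x : V} (hx : x ∈ T.N) (h0 : T.depth x ≠ 0) :
    ∃ z, (x, z) ∈ T.E := by
  by_contra! h
  exact h0 (T.depth_root x hx h)

theorem exists_min_depth {S : Set V} (hS : S.Nonempty) :
    ∃ y ∈ S, ∀ x ∈ S, T.depth y ≤ T.depth x :=
  ⟨_, Function.argminOn_mem T.depth S hS, fun _ hx => Function.argminOn_le T.depth S hx⟩

section Admissible

variable {S : Set V} {x y z p q : V}

theorem Admissible.parent_mem (hS : T.Admissible S) (hx : x ∈ S) (hy : y ∈ S)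
    (hxy : T.depth x < T.depth y) (hyz : (y, z) ∈ T.E) : z ∈ S :=
  hS.1 x hx y hy hxy z hyz

theorem Admissible.parent_eq (hS : T.Admissible S) (hx : x ∈ S) (hy : y ∈ S)
    (hxmin : ∀ u ∈ S, T.depth x ≤ T.depth u) (hxy : T.depth x = T.depth y)
    (hxp : (x, p) ∈ T.E) (hyq : (y, q) ∈ T.E) : p = q := by
  by_contra hpq
  have hp := (hS.2 x hx y hy hxy p q hxp hyq hpq).1
  have := hxmin p hp
  have := T.depth_edge x p hxp
  omega

end Admissible

structure Links (T : LionsForest V d) (A B C : Set V) : Prop where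
  admissible_left : T.Admissible A
  admissible_right : T.Admissible B
  admissible : T.Admissible C
  subset_N : C ⊆ T.N
  disjoint : Disjoint A B
  subset_union : C ⊆ A ∪ B
  inter_left : (C ∩ A).Nonempty
  inter_right : (C ∩ B).Nonempty

namespace Links

variable {A B C : Set V} {w w' x y z p q : V}

theorem symm (hL : T.Links A B C) : T.Links B A C :=
  ⟨hL.admissible_right, hL.admissible_left, hL.admissible, hL.subset_N, hL.disjoint.symm,
    Set.union_comm A B ▸ hL.subset_union, hL.inter_right, hL.inter_left⟩

theorem min_depth_of_min_depth_inter (hL : T.Links A B C)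
    (hwmin : ∀ u ∈ C ∩ A, T.depth w ≤ T.depth u) (hw'min : ∀ u ∈ C ∩ B, T.depth w' ≤ T.depth u)
    (hww' : T.depth w ≤ T.depth w') : ∀ u ∈ C, T.depth w ≤ T.depth u := fun u hu =>
  (hL.subset_union hu).elim (fun h => hwmin u ⟨hu, h⟩) fun h => hww'.trans (hw'min u ⟨hu, h⟩)

theorem min_depth_inter_le (hL : T.Links A B C) (hw : w ∈ C) (hw' : w' ∈ C ∩ B)
    (hw'min : ∀ u ∈ C ∩ B, T.depth w' ≤ T.depth u) (hx : x ∈ B)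
    (hxw' : T.depth x < T.depth w') : T.depth w' ≤ T.depth w := by
  by_contra! hww'
  obtain ⟨z, hw'z⟩ := T.exists_edge_of_depth_ne_zero (hL.subset_N hw'.1) (by omega)
  have hzC := hL.admissible.parent_mem hw hw'.1 hww' hw'z
  have hzB := hL.admissible_right.parent_mem hx hw'.2 hxw' hw'z
  have := hw'min z ⟨hzC, hzB⟩
  have := T.depth_edge w' z hw'z
  omega

theorem parent_mem_right (hL : T.Links A B C) (hy : y ∈ A)
    (hymin : ∀ u ∈ A, T.depth y ≤ T.depth u) (hx : x ∈ B) (hxy : T.depth x < T.depth y)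
    (hyz : (y, z) ∈ T.E) : z ∈ B := by
  obtain ⟨w, hw, hwmin⟩ := exists_min_depth (T := T) hL.inter_left
  obtain ⟨w', hw', hw'min⟩ := exists_min_depth (T := T) hL.inter_right
  have hyw := hymin w hw.2
  obtain ⟨q, hwq⟩ := T.exists_edge_of_depth_ne_zero (hL.subset_N hw.1) (by omega)
  have hqB : q ∈ B := by
    rcases lt_or_ge (T.depth w') (T.depth w) with hlt | hle
    · have hqC := hL.admissible.parent_mem hw'.1 hw.1 hlt hwq
      refine (hL.subset_union hqC).resolve_left fun hqA => ?_
      have := hwmin q ⟨hqC, hqA⟩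
      have := T.depth_edge w q hwq
      omega
    · have := hL.min_depth_inter_le hw.1 hw' hw'min hx (by omega)
      obtain ⟨q', hw'q'⟩ := T.exists_edge_of_depth_ne_zero (hL.subset_N hw'.1) (by omega)
      rw [hL.admissible.parent_eq hw.1 hw'.1 (hL.min_depth_of_min_depth_inter hwmin hw'min hle)
        (by omega) hwq hw'q']
      exact hL.admissible_right.parent_mem hx hw'.2 (by omega) hw'q'
  have hyw : T.depth y = T.depth w := by
    by_contra hne
    exact hL.disjoint.ne_of_mem (hL.admissible_left.parent_mem hy hw.2 (by omega) hwq) hqB rfl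
  rwa [hL.admissible_left.parent_eq hy hw.2 hymin hyw hyz hwq]

theorem parent_eq_of_min (hL : T.Links A B C) (hx : x ∈ A)
    (hxmin : ∀ u ∈ A, T.depth x ≤ T.depth u) (hy : y ∈ B)
    (hymin : ∀ u ∈ B, T.depth y ≤ T.depth u) (hxy : T.depth x = T.depth y)
    (hxp : (x, p) ∈ T.E) (hyq : (y, q) ∈ T.E) : p = q := by
  obtain ⟨w, hw, hwmin⟩ := exists_min_depth (T := T) hL.inter_left
  obtain ⟨w', hw', hw'min⟩ := exists_min_depth (T := T) hL.inter_right
  wlog hle : T.depth w ≤ T.depth w' generalizing A B x y p q w w'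
  · exact (this hL.symm hy hymin hx hxmin hxy.symm hyq hxp w' hw' hw'min w hw hwmin
      (by omega)).symm
  have hxw := hxmin w hw.2
  have hw'w : T.depth w' ≤ T.depth w := by
    by_cases h : T.depth y < T.depth w'
    · exact hL.min_depth_inter_le hw.1 hw' hw'min hy h
    · omega
  have := T.depth_edge x p hxp
  obtain ⟨r, hwr⟩ := T.exists_edge_of_depth_ne_zero (hL.subset_N hw.1) (by omega)
  obtain ⟨r', hw'r'⟩ := T.exists_edge_of_depth_ne_zero (hL.subset_N hw'.1) (by omega)
  have hrr' := hL.admissible.parent_eq hw.1 hw'.1 (hL.min_depth_of_min_depth_inter hwmin hw'min hle)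
    (by omega) hwr hw'r'
  rcases hxw.eq_or_lt with hxw | hxw
  · rw [hL.admissible_left.parent_eq hx hw.2 hxmin hxw hxp hwr, hrr',
      hL.admissible_right.parent_eq hy hw'.2 hymin (by omega) hyq hw'r']
  · exact absurd hrr' (hL.disjoint.ne_of_mem (hL.admissible_left.parent_mem hx hw.2 hxw hwr)
      (hL.admissible_right.parent_mem hy hw'.2 (by omega) hw'r'))

theorem union_parent_mem_of_mem_left (hL : T.Links A B C) (hx : x ∈ A ∪ B) (hy : y ∈ A)
    (hxy : T.depth x < T.depth y) (hyz : (y, z) ∈ T.E) : z ∈ A ∪ B := by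
  by_cases hnotmin : ∃ m ∈ A, T.depth m < T.depth y
  · obtain ⟨m, hm, hmy⟩ := hnotmin
    exact Or.inl (hL.admissible_left.parent_mem hm hy hmy hyz)
  push Not at hnotmin
  rcases hx with hxA | hxB
  · exact absurd (hnotmin x hxA) (by omega)
  · exact Or.inr (hL.parent_mem_right hy hnotmin hxB hxy hyz)

theorem union_parent_mem (hL : T.Links A B C) (hx : x ∈ A ∪ B) (hy : y ∈ A ∪ B)
    (hxy : T.depth x < T.depth y) (hyz : (y, z) ∈ T.E) : z ∈ A ∪ B := by
  rcases hy with hyA | hyB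
  · exact hL.union_parent_mem_of_mem_left hx hyA hxy hyz
  · rw [Set.union_comm] at hx ⊢
    exact hL.symm.union_parent_mem_of_mem_left hx hyB hxy hyz

theorem union_sibling_mem (hL : T.Links A B C) (hx : x ∈ A) (hy : y ∈ B)
    (hxy : T.depth x = T.depth y) (hxp : (x, p) ∈ T.E) (hyq : (y, q) ∈ T.E) (hpq : p ≠ q) :
    p ∈ A ∪ B ∧ q ∈ A ∪ B := by
  have := T.depth_edge x p hxp
  have := T.depth_edge y q hyq
  by_cases hxnotmin : ∃ m ∈ A, T.depth m < T.depth x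
  · obtain ⟨m, hm, hmx⟩ := hxnotmin
    have hpA := hL.admissible_left.parent_mem hm hx hmx hxp
    exact ⟨Or.inl hpA, hL.union_parent_mem (Or.inl hpA) (Or.inr hy) (by omega) hyq⟩
  by_cases hynotmin : ∃ m ∈ B, T.depth m < T.depth y
  · obtain ⟨m, hm, hmy⟩ := hynotmin
    have hqB := hL.admissible_right.parent_mem hm hy hmy hyq
    exact ⟨hL.union_parent_mem (Or.inr hqB) (Or.inl hx) (by omega) hxp, Or.inr hqB⟩
  push Not at hxnotmin hynotmin
  exact absurd (hL.parent_eq_of_min hx hxnotmin hy hynotmin hxy hxp hyq) hpq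

theorem admissible_union (hL : T.Links A B C) : T.Admissible (A ∪ B) := by
  refine ⟨fun x hx y hy hxy z hyz => hL.union_parent_mem hx hy hxy hyz, ?_⟩
  rintro x₁ (hx₁ | hx₁) y₁ (hy₁ | hy₁) hxy x₂ y₂ hx₂ hy₂ hne
  · exact (hL.admissible_left.2 x₁ hx₁ y₁ hy₁ hxy x₂ y₂ hx₂ hy₂ hne).imp Or.inl Or.inl
  · exact hL.union_sibling_mem hx₁ hy₁ hxy hx₂ hy₂ hne
  · rw [Set.union_comm]
    exact hL.symm.union_sibling_mem hx₁ hy₁ hxy hx₂ hy₂ hne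
  · exact (hL.admissible_right.2 x₁ hx₁ y₁ hy₁ hxy x₂ y₂ hx₂ hy₂ hne).imp Or.inr Or.inr

end Links


theorem isPartitionOf_hyperedges (T : LionsForest V d) : IsPartitionOf T.N T.hyperedges :=
  IsPartitionOf.insert_diff_empty T.h0_subset T.H_partition

theorem nonempty_of_mem_hyperedges {h : Set V} (hh : h ∈ T.hyperedges) : h.Nonempty :=
  T.isPartitionOf_hyperedges.1 h hh

theorem subset_N_of_mem_hyperedges {h : Set V} (hh : h ∈ T.hyperedges) : h ⊆ T.N :=
  T.isPartitionOf_hyperedges.2.1 h hh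

theorem mem_hyperedges_of_mem_H {h : Set V} (hh : h ∈ T.H) : h ∈ T.hyperedges :=
  ⟨Or.inr hh, fun h0 => (T.H_partition.1 h hh).ne_empty h0⟩

theorem h0_not_mem_H : T.h0 ∉ T.H := fun hh => by
  obtain ⟨x, hx⟩ := T.H_partition.1 _ hh
  exact (T.H_partition.2.1 _ hh hx).2 hx

theorem union_not_mem_hyperedges {g₁ g₂ : Set V} (h : dualAdj T g₁ g₂) :
    g₁ ∪ g₂ ∉ T.hyperedges := fun hU => by
  obtain ⟨x, hx⟩ := nonempty_of_mem_hyperedges h.1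
  obtain ⟨y, hy⟩ := nonempty_of_mem_hyperedges h.2.1
  have h₁ := T.isPartitionOf_hyperedges.eq_of_mem_of_mem h.1 hU hx (Or.inl hx)
  have h₂ := T.isPartitionOf_hyperedges.eq_of_mem_of_mem h.2.1 hU hy (Or.inr hy)
  exact h.2.2.1 (h₁.trans h₂.symm)

def withHyperedges (T : LionsForest V d) (g₀ : Set V) (G : Set (Set V))
    (hpart : IsPartitionOf T.N (insert g₀ G \ {∅})) (hg₀ : g₀ ∉ G) (hG : ∅ ∉ G)
    (hroot : g₀.Nonempty → ∃ x ∈ g₀, ∀ y, (x, y) ∉ T.E)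
    (hadm : ∀ g ∈ insert g₀ G \ {∅}, T.Admissible g) : LionsForest V d where
  N := T.N
  E := T.E
  h0 := g₀
  H := G
  L := T.L
  depth := T.depth
  finite_N := T.finite_N
  nonempty_N := T.nonempty_N
  mem_of_edge := T.mem_of_edge
  edge_unique := T.edge_unique
  h0_subset x hx := hpart.2.1 g₀ ⟨Or.inl rfl, Set.nonempty_iff_ne_empty.1 ⟨x, hx⟩⟩ hx
  H_partition := hpart.of_insert_diff_empty hg₀ hG
  depth_root := T.depth_root
  depth_edge := T.depth_edge
  h0_root := hroot
  hyper_parent g hg := (hadm g hg).1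
  hyper_sibling g hg := (hadm g hg).2

section Merge

variable {g₁ g₂ : Set V}

open Classical in
noncomputable def mergeH0 (T : LionsForest V d) (g₁ g₂ : Set V) : Set V :=
  if T.h0 = g₁ ∨ T.h0 = g₂ then g₁ ∪ g₂ else T.h0

open Classical in
noncomputable def mergeH (T : LionsForest V d) (g₁ g₂ : Set V) : Set (Set V) :=
  if T.h0 = g₁ ∨ T.h0 = g₂ then T.H \ {g₁, g₂} else T.H \ {g₁, g₂} ∪ {g₁ ∪ g₂}

theorem insert_mergeH0_mergeH (hne : g₁ ∪ g₂ ≠ ∅) :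
    insert (T.mergeH0 g₁ g₂) (T.mergeH g₁ g₂) \ {∅} =
      insert (g₁ ∪ g₂) (T.hyperedges \ {g₁, g₂}) := by
  ext s
  unfold mergeH0 mergeH hyperedges
  split_ifs <;>
  · simp only [Set.mem_sdiff, Set.mem_insert_iff, Set.mem_singleton_iff, Set.mem_union]
    grind

theorem union_ne_empty_of_dualAdj (h : dualAdj T g₁ g₂) : g₁ ∪ g₂ ≠ ∅ :=
  ((nonempty_of_mem_hyperedges h.1).mono Set.subset_union_left).ne_empty

theorem mergeH0_not_mem_mergeH (h : dualAdj T g₁ g₂) : T.mergeH0 g₁ g₂ ∉ T.mergeH g₁ g₂ := by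
  unfold mergeH0 mergeH
  split_ifs
  · exact fun hU => union_not_mem_hyperedges h (mem_hyperedges_of_mem_H hU.1)
  · rintro (⟨hH, -⟩ | hU)
    · exact T.h0_not_mem_H hH
    · rw [Set.mem_singleton_iff] at hU
      have h0_mem : T.h0 ∈ T.hyperedges := ⟨Or.inl rfl, hU ▸ union_ne_empty_of_dualAdj h⟩
      exact union_not_mem_hyperedges h (hU ▸ h0_mem)

theorem empty_not_mem_mergeH (h : dualAdj T g₁ g₂) : ∅ ∉ T.mergeH g₁ g₂ := by
  have hH : ∅ ∉ T.H := fun h0 => (T.H_partition.1 ∅ h0).ne_empty rfl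
  unfold mergeH
  split_ifs
  · exact fun h0 => hH h0.1
  · rintro (h0 | h0)
    · exact hH h0.1
    · exact union_ne_empty_of_dualAdj h (Set.mem_singleton_iff.1 h0).symm

theorem exists_root_of_nonempty_mergeH0 (h : dualAdj T g₁ g₂) :
    (T.mergeH0 g₁ g₂).Nonempty → ∃ x ∈ T.mergeH0 g₁ g₂, ∀ y, (x, y) ∉ T.E := by
  unfold mergeH0
  split_ifs with hc
  · intro _
    have hsub : T.h0 ⊆ g₁ ∪ g₂ := hc.elim (fun h => h ▸ Set.subset_union_left)
      fun h => h ▸ Set.subset_union_right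
    have hne : T.h0.Nonempty := hc.elim (fun hc => hc ▸ nonempty_of_mem_hyperedges h.1)
      fun hc => hc ▸ nonempty_of_mem_hyperedges h.2.1
    obtain ⟨x, hx, hroot⟩ := T.h0_root hne
    exact ⟨x, hsub hx, hroot⟩
  · exact T.h0_root

noncomputable def merge (T : LionsForest V d) (g₁ g₂ : Set V) (h : dualAdj T g₁ g₂) :
    LionsForest V d :=
  T.withHyperedges (T.mergeH0 g₁ g₂) (T.mergeH g₁ g₂)
    (by
      rw [insert_mergeH0_mergeH (union_ne_empty_of_dualAdj h)]
      exact T.isPartitionOf_hyperedges.merge h.1 h.2.1)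
    (mergeH0_not_mem_mergeH h) (empty_not_mem_mergeH h) (exists_root_of_nonempty_mergeH0 h)
    (by
      rw [insert_mergeH0_mergeH (union_ne_empty_of_dualAdj h)]
      rintro g (rfl | ⟨hg, -⟩)
      · exact h.2.2.2
      · exact admissible_of_mem_hyperedges hg)

theorem isMerge_merge (h : dualAdj T g₁ g₂) : IsMerge T g₁ g₂ (T.merge g₁ g₂ h) :=
  ⟨rfl, rfl, rfl, fun hc => ⟨if_pos hc, if_pos hc⟩, fun hc => ⟨if_neg hc, if_neg hc⟩⟩

theorem hyperedges_merge (h : dualAdj T g₁ g₂) :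
    (T.merge g₁ g₂ h).hyperedges = insert (g₁ ∪ g₂) (T.hyperedges \ {g₁, g₂}) :=
  insert_mergeH0_mergeH (union_ne_empty_of_dualAdj h)

end Merge

end LionsForest

section PrefixGraph

variable {V : Type*} {n : ℕ} (e : Fin n → Set V × Set V)

def prefixGraph (k : ℕ) : SimpleGraph (Set V) :=
  SimpleGraph.fromRel fun a b => ∃ j : Fin n, (j : ℕ) < k ∧ a = (e j).1 ∧ b = (e j).2

variable {e}

theorem prefixGraph_mono {k l : ℕ} (hkl : k ≤ l) : prefixGraph e k ≤ prefixGraph e l := by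
  rintro a b ⟨hab, hj⟩
  refine ⟨hab, hj.imp ?_ ?_⟩ <;>
  · rintro ⟨j, hj, rfl, rfl⟩
    exact ⟨j, by omega, rfl, rfl⟩

theorem prefixGraph_adj (j : Fin n) (hne : (e j).1 ≠ (e j).2) :
    (prefixGraph e (j + 1)).Adj (e j).1 (e j).2 :=
  ⟨hne, Or.inl ⟨j, Nat.lt_succ_self j, rfl, rfl⟩⟩

/-- Every edge of an acyclic graph is a bridge, and by `hdist` the earlier edges avoid `e j`. -/
theorem not_reachable_prefixGraph (hne : ∀ j, (e j).1 ≠ (e j).2)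
    (hdist : ∀ j k, j ≠ k →
      ¬((e j).1 = (e k).1 ∧ (e j).2 = (e k).2) ∧ ¬((e j).1 = (e k).2 ∧ (e j).2 = (e k).1))
    (hacyc : (SimpleGraph.fromRel fun a b : Set V => ∃ j, a = (e j).1 ∧ b = (e j).2).IsAcyclic)
    (j : Fin n) : ¬(prefixGraph e j).Reachable (e j).1 (e j).2 := by
  have hbridge := SimpleGraph.isAcyclic_iff_forall_adj_isBridge.1 hacyc
    ⟨hne j, Or.inl ⟨j, rfl, rfl⟩⟩
  refine fun hreach => SimpleGraph.isBridge_iff.1 hbridge (hreach.mono ?_)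
  rintro a b ⟨hab, hi⟩
  refine SimpleGraph.deleteEdges_adj.2 ⟨⟨hab, hi.imp ?_ ?_⟩, ?_⟩
  · exact fun ⟨i, _, h⟩ => ⟨i, h⟩
  · exact fun ⟨i, _, h⟩ => ⟨i, h⟩
  · rw [Set.mem_singleton_iff, Sym2.eq_iff]
    rcases hi with ⟨i, hij, rfl, rfl⟩ | ⟨i, hij, rfl, rfl⟩ <;>
    · have := hdist i j (Fin.ne_of_lt hij)
      tauto

end PrefixGraph

namespace LionsForest

variable {V : Type*} {d n : ℕ} {T T' : LionsForest V d} {e : Fin n → Set V × Set V} {k : ℕ}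

/-- `T'` arises from `T` by merging along the first `k` pairs of `e`: each hyperedge of `T'` is
a union of hyperedges of `T` connected by those pairs. -/
structure IsMergedAlong (T : LionsForest V d) (e : Fin n → Set V × Set V) (k : ℕ)
    (T' : LionsForest V d) : Prop where
  E_eq : T'.E = T.E
  depth_eq : T'.depth = T.depth
  exists_superset : ∀ h ∈ T.hyperedges, ∃ g ∈ T'.hyperedges, h ⊆ g
  reachable : ∀ h ∈ T.hyperedges, ∀ h' ∈ T.hyperedges, ∀ g ∈ T'.hyperedges, h ⊆ g → h' ⊆ g →
    (prefixGraph e k).Reachable h h'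

theorem isMergedAlong_zero (T : LionsForest V d) (e : Fin n → Set V × Set V) :
    T.IsMergedAlong e 0 T := by
  refine ⟨rfl, rfl, fun h hh => ⟨h, hh, subset_rfl⟩, fun h hh h' hh' g hg hhg hh'g => ?_⟩
  obtain ⟨x, hx⟩ := nonempty_of_mem_hyperedges hh
  obtain ⟨x', hx'⟩ := nonempty_of_mem_hyperedges hh'
  have hP := T.isPartitionOf_hyperedges
  rw [hP.eq_of_mem_of_mem hh hg hx (hhg hx), hP.eq_of_mem_of_mem hh' hg hx' (hh'g hx')]

theorem IsMergedAlong.subset_or_subset (hI : T.IsMergedAlong e k T') {g₁ g₂ h : Set V}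
    (hg₁ : g₁ ∈ T'.hyperedges) (hg₂ : g₂ ∈ T'.hyperedges) (hh : h ∈ T.hyperedges)
    (hsub : h ⊆ g₁ ∪ g₂) : h ⊆ g₁ ∨ h ⊆ g₂ := by
  obtain ⟨g, hg, hhg⟩ := hI.exists_superset h hh
  obtain ⟨x, hx⟩ := nonempty_of_mem_hyperedges hh
  have hP := T'.isPartitionOf_hyperedges
  exact (hsub hx).imp (fun hx₁ => hP.eq_of_mem_of_mem hg hg₁ (hhg hx) hx₁ ▸ hhg)
    fun hx₂ => hP.eq_of_mem_of_mem hg hg₂ (hhg hx) hx₂ ▸ hhg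

theorem IsMergedAlong.merge (hI : T.IsMergedAlong e k T') (j : Fin n) (hjk : (j : ℕ) = k)
    (hadj : dualAdj T (e j).1 (e j).2) {g₁ g₂ : Set V} (hg₁ : g₁ ∈ T'.hyperedges)
    (hg₂ : g₂ ∈ T'.hyperedges) (he₁ : (e j).1 ⊆ g₁) (he₂ : (e j).2 ⊆ g₂)
    (h : dualAdj T' g₁ g₂) : T.IsMergedAlong e (k + 1) (T'.merge g₁ g₂ h) := by
  have hmono := prefixGraph_mono (e := e) (Nat.le_succ k)
  refine ⟨hI.E_eq, hI.depth_eq, fun a ha => ?_, fun a ha a' ha' g hg hag ha'g => ?_⟩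
  · obtain ⟨g, hg, hag⟩ := hI.exists_superset a ha
    rw [hyperedges_merge]
    by_cases hg₁₂ : g = g₁ ∨ g = g₂
    · refine ⟨g₁ ∪ g₂, Or.inl rfl, hag.trans ?_⟩
      rcases hg₁₂ with rfl | rfl
      exacts [Set.subset_union_left, Set.subset_union_right]
    · exact ⟨g, Or.inr ⟨hg, hg₁₂⟩, hag⟩
  rw [hyperedges_merge] at hg
  rcases hg with rfl | ⟨hg, -⟩
  · have hreach : ∀ b ∈ T.hyperedges, b ⊆ g₁ ∪ g₂ →
        (prefixGraph e (k + 1)).Reachable b (e j).1 := by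
      have hj := (prefixGraph_adj j hadj.2.2.1).reachable
      rw [hjk] at hj
      intro b hb hbg
      rcases hI.subset_or_subset hg₁ hg₂ hb hbg with hb₁ | hb₂
      · exact (hI.reachable b hb _ hadj.1 g₁ hg₁ hb₁ he₁).mono hmono
      · exact ((hI.reachable b hb _ hadj.2.1 g₂ hg₂ hb₂ he₂).mono hmono).trans hj.symm
    exact (hreach a ha hag).trans (hreach a' ha' ha'g).symm
  · exact (hI.reachable a ha a' ha' g hg hag ha'g).mono hmono


def IsMergeStep (p : Set V × Set V) (T' T'' : LionsForest V d) : Prop :=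
  ∃ g₁ g₂ : Set V, g₁ ∈ T'.hyperedges ∧ p.1 ⊆ g₁ ∧ g₂ ∈ T'.hyperedges ∧ p.2 ⊆ g₂ ∧
    g₁ ≠ g₂ ∧ dualAdj T' g₁ g₂ ∧ IsMerge T' g₁ g₂ T''

theorem IsMergedAlong.exists_isMergeStep (hI : T.IsMergedAlong e k T') (j : Fin n)
    (hjk : (j : ℕ) = k) (hadj : dualAdj T (e j).1 (e j).2)
    (hsep : ¬(prefixGraph e k).Reachable (e j).1 (e j).2) :
    ∃ T'', IsMergeStep (e j) T' T'' ∧ T.IsMergedAlong e (k + 1) T'' := by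
  obtain ⟨he₁T, he₂T, -, hadm⟩ := dualAdj_iff.1 hadj
  obtain ⟨g₁, hg₁, he₁⟩ := hI.exists_superset _ he₁T
  obtain ⟨g₂, hg₂, he₂⟩ := hI.exists_superset _ he₂T
  have hne : g₁ ≠ g₂ := by
    rintro rfl
    exact hsep (hI.reachable _ he₁T _ he₂T g₁ hg₁ he₁ he₂)
  obtain ⟨x₁, hx₁⟩ := nonempty_of_mem_hyperedges he₁T
  obtain ⟨x₂, hx₂⟩ := nonempty_of_mem_hyperedges he₂T
  have hL : T'.Links g₁ g₂ ((e j).1 ∪ (e j).2) :=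
    { admissible_left := admissible_of_mem_hyperedges hg₁
      admissible_right := admissible_of_mem_hyperedges hg₂
      admissible := hadm.of_E_depth_eq hI.E_eq hI.depth_eq
      subset_N := (Set.union_subset_union he₁ he₂).trans
        (Set.union_subset (subset_N_of_mem_hyperedges hg₁) (subset_N_of_mem_hyperedges hg₂))
      disjoint := T'.isPartitionOf_hyperedges.2.2.1 hg₁ hg₂ hne
      subset_union := Set.union_subset_union he₁ he₂
      inter_left := ⟨x₁, Or.inl hx₁, he₁ hx₁⟩
      inter_right := ⟨x₂, Or.inr hx₂, he₂ hx₂⟩ }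
  have h : dualAdj T' g₁ g₂ := dualAdj_iff.2 ⟨hg₁, hg₂, hne, hL.admissible_union⟩
  exact ⟨T'.merge g₁ g₂ h, ⟨g₁, g₂, hg₁, he₁, hg₂, he₂, hne, h, isMerge_merge h⟩,
    hI.merge j hjk hadj hg₁ hg₂ he₁ he₂ h⟩

theorem exists_isMergeStep_chain (hadj : ∀ j, dualAdj T (e j).1 (e j).2)
    (hdist : ∀ j k, j ≠ k →
      ¬((e j).1 = (e k).1 ∧ (e j).2 = (e k).2) ∧ ¬((e j).1 = (e k).2 ∧ (e j).2 = (e k).1))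
    (hacyc : (SimpleGraph.fromRel fun a b : Set V => ∃ j, a = (e j).1 ∧ b = (e j).2).IsAcyclic) :
    ∀ k ≤ n, ∃ Ts : ℕ → LionsForest V d, Ts 0 = T ∧ T.IsMergedAlong e k (Ts k) ∧
      ∀ j : Fin n, (j : ℕ) < k → IsMergeStep (e j) (Ts j) (Ts (j + 1)) := by
  intro k
  induction k with
  | zero => exact fun _ => ⟨fun _ => T, rfl, isMergedAlong_zero T e, fun j hj => by omega⟩
  | succ k ih =>
    intro hk
    obtain ⟨Ts, hTs₀, hI, hsteps⟩ := ih (by omega)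
    obtain ⟨T'', hstep, hI''⟩ := hI.exists_isMergeStep ⟨k, hk⟩ rfl (hadj _)
      (not_reachable_prefixGraph (fun j => (hadj j).2.2.1) hdist hacyc ⟨k, hk⟩)
    refine ⟨Function.update Ts (k + 1) T'', ?_, ?_, fun j hj => ?_⟩
    · rwa [Function.update_of_ne (by omega)]
    · rwa [Function.update_self]
    rw [Function.update_of_ne (by omega)]
    rcases Nat.lt_succ_iff_lt_or_eq.1 hj with hj | hj
    · rw [Function.update_of_ne (by omega)]
      exact hsteps j hj
    · obtain rfl : j = ⟨k, hk⟩ := Fin.ext hj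
      rwa [Function.update_self]

end LionsForest

/-- Given distinct edges `d₁, …, dₙ` of the dual Lions forest of `T` spanning no cycle, the
hyperedges can be merged successively: there are Lions forests `T⁽⁰⁾ = T, T⁽¹⁾, …, T⁽ⁿ⁾` such
that, at each step `j`, the hyperedges of `T⁽ʲ⁻¹⁾` containing the two ends of `dⱼ` are
distinct, dual-adjacent in `T⁽ʲ⁻¹⁾`, and `T⁽ʲ⁾` is the corresponding merged Lions forest. -/
theorem stmt_7 {V : Type*} {d : ℕ} (T : LionsForest V d) (n : ℕ)
    (e : Fin n → Set V × Set V)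
    (hadj : ∀ j, dualAdj T (e j).1 (e j).2)
    (hdist : ∀ j k, j ≠ k →
      ¬((e j).1 = (e k).1 ∧ (e j).2 = (e k).2) ∧
      ¬((e j).1 = (e k).2 ∧ (e j).2 = (e k).1))
    (hacyc : (SimpleGraph.fromRel fun a b : Set V =>
        ∃ j, a = (e j).1 ∧ b = (e j).2).IsAcyclic) :
    ∃ Ts : ℕ → LionsForest V d, Ts 0 = T ∧
      ∀ j : Fin n, ∃ g1 g2 : Set V,
        g1 ∈ (Ts (j : ℕ)).hyperedges ∧ (e j).1 ⊆ g1 ∧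
        g2 ∈ (Ts (j : ℕ)).hyperedges ∧ (e j).2 ⊆ g2 ∧
        g1 ≠ g2 ∧ dualAdj (Ts (j : ℕ)) g1 g2 ∧
        IsMerge (Ts (j : ℕ)) g1 g2 (Ts ((j : ℕ) + 1)) := by
  obtain ⟨Ts, hTs₀, -, hsteps⟩ := LionsForest.exists_isMergeStep_chain hadj hdist hacyc n le_rfl
  exact ⟨Ts, hTs₀, fun j => hsteps j j.isLt⟩
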